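/- arXiv:2111.06580 — 2 statements merged into one kernel-verified Lean document; each statement's English description precedes it below -/
import Mathlib

section
/- Let N, K be positive integers, let C be a real N×N matrix, let s be a nonnegative real number, and define J(X, Y) = (1/2)·‖C − X·Yᵀ‖_F² + (s/2)·‖X − Y‖_F² for N×K real matrices X, Y. Then for any fixed N×K real matrix Y, the map X ↦ ∇_X J(X, Y) = (X·Yᵀ − C)·Y + s·(X − Y) is globally Lipschitz continuous with respect to the Frobenius norm, with Lipschitz constant L₁(Y) = ‖Yᵀ·Y + s·I_K‖₂, i.e., for all N×K real matrices X, X' it holds that ‖∇_X J(X, Y) − ∇_X J(X', Y)‖_F ≤ ‖Yᵀ·Y + s·I_K‖₂ · ‖X − X'‖_F. -/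
open Matrix

/-- The Frobenius norm of a real matrix. -/
noncomputable def frobNorm {N K : ℕ} (A : Matrix (Fin N) (Fin K) ℝ) : ℝ :=
  Real.sqrt (∑ i, ∑ k, (A i k) ^ 2)

/-- The spectral norm (operator 2-norm, i.e. largest singular value) of a real
square matrix, as the operator norm of the induced map on Euclidean space. -/
noncomputable def matSpectralNorm {K : ℕ} (M : Matrix (Fin K) (Fin K) ℝ) : ℝ :=
  ‖LinearMap.toContinuousLinearMap (Matrix.toEuclideanLin M)‖

/-!
The gradient is affine in `X` with linear part `D ↦ D * (Yᵀ * Y + s • 1)`, so it suffices to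
bound `‖D * M‖_F ≤ ‖M‖₂ ‖D‖_F`. This holds row by row: the `i`-th row of `D * M` is
`Mᵀ` applied to the `i`-th row of `D`, and `‖Mᵀ‖₂ = ‖M‖₂`.
-/

lemma frobNorm_eq_sqrt_sum_norm_row_sq {N K : ℕ} (A : Matrix (Fin N) (Fin K) ℝ) :
    frobNorm A = √(∑ i, ‖WithLp.toLp 2 (A i)‖ ^ 2) := by
  simp only [frobNorm, EuclideanSpace.real_norm_sq_eq]

open scoped Matrix.Norms.L2Operator in
lemma matSpectralNorm_eq_l2_opNorm_transpose {K : ℕ} (M : Matrix (Fin K) (Fin K) ℝ) :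
    matSpectralNorm M = ‖Mᵀ‖ :=
  (l2_opNorm_conjTranspose M).symm

open scoped Matrix.Norms.L2Operator in
lemma norm_vecMul_le {K : ℕ} (v : Fin K → ℝ) (M : Matrix (Fin K) (Fin K) ℝ) :
    ‖WithLp.toLp 2 (v ᵥ* M)‖ ≤ matSpectralNorm M * ‖WithLp.toLp 2 v‖ := by
  rw [← mulVec_transpose, matSpectralNorm_eq_l2_opNorm_transpose]
  exact l2_opNorm_mulVec Mᵀ (WithLp.toLp 2 v)

lemma frobNorm_mul_le {N K : ℕ} (D : Matrix (Fin N) (Fin K) ℝ) (M : Matrix (Fin K) (Fin K) ℝ) :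
    frobNorm (D * M) ≤ matSpectralNorm M * frobNorm D := by
  have hM : 0 ≤ matSpectralNorm M := norm_nonneg _
  rw [frobNorm_eq_sqrt_sum_norm_row_sq, frobNorm_eq_sqrt_sum_norm_row_sq,
    ← Real.sqrt_sq hM, ← Real.sqrt_mul (sq_nonneg _), Finset.mul_sum]
  gcongr with i
  rw [← mul_pow]
  exact pow_le_pow_left₀ (norm_nonneg _) (norm_vecMul_le (D i) M) 2

lemma gradX_sub_gradX_eq_mul {N K : ℕ} (C : Matrix (Fin N) (Fin N) ℝ) (s : ℝ)
    (X X' Y : Matrix (Fin N) (Fin K) ℝ) :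
    ((X * Yᵀ - C) * Y + s • (X - Y)) - ((X' * Yᵀ - C) * Y + s • (X' - Y))
      = (X - X') * (Yᵀ * Y + s • (1 : Matrix (Fin K) (Fin K) ℝ)) := by
  simp only [Matrix.sub_mul, Matrix.mul_add, Matrix.mul_one, smul_sub, Matrix.mul_smul,
    Matrix.mul_assoc]
  abel

theorem gradX_lipschitz_general (N K : ℕ)
    (C : Matrix (Fin N) (Fin N) ℝ) (s : ℝ)
    (Y : Matrix (Fin N) (Fin K) ℝ) :
    ∀ X X' : Matrix (Fin N) (Fin K) ℝ,
      frobNorm (((X * Yᵀ - C) * Y + s • (X - Y)) - ((X' * Yᵀ - C) * Y + s • (X' - Y)))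
        ≤ matSpectralNorm (Yᵀ * Y + s • (1 : Matrix (Fin K) (Fin K) ℝ)) * frobNorm (X - X') := by
  intro X X'
  rw [gradX_sub_gradX_eq_mul]
  exact frobNorm_mul_le _ _

/-- For `J(X, Y) = (1/2)·‖C − X·Yᵀ‖_F² + (s/2)·‖X − Y‖_F²` with `s ≥ 0`, the map
`X ↦ ∇_X J(X, Y) = (X·Yᵀ − C)·Y + s·(X − Y)` is globally Lipschitz in the Frobenius
norm with constant `‖Yᵀ·Y + s·I_K‖₂`. -/
theorem gradX_lipschitz (N K : ℕ) (hN : 0 < N) (hK : 0 < K)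
    (C : Matrix (Fin N) (Fin N) ℝ) (s : ℝ) (hs : 0 ≤ s)
    (Y : Matrix (Fin N) (Fin K) ℝ) :
    ∀ X X' : Matrix (Fin N) (Fin K) ℝ,
      frobNorm (((X * Yᵀ - C) * Y + s • (X - Y)) - ((X' * Yᵀ - C) * Y + s • (X' - Y)))
        ≤ matSpectralNorm (Yᵀ * Y + s • (1 : Matrix (Fin K) (Fin K) ℝ)) * frobNorm (X - X') :=
  gradX_lipschitz_general N K C s Y
end

section
/- Let A be a real N×N matrix, Q a real N×K matrix with orthonormal columns (Qᵀ·Q = I_K), and X a real N×K matrix with Aᵀ = Q·Xᵀ. Let P be a real K×r matrix with orthonormal columns. Then for any nonempty finite set R of indices in {1, …, N}, an index i* ∈ R maximizes the residual norm ‖(I_N − (Q·P)·(Q·P)ᵀ)·(A_{i*})ᵀ‖₂ over i ∈ R if and only if i* maximizes ‖(I_K − P·Pᵀ)·(X_{i*})ᵀ‖₂ over i ∈ R. Consequently, the column-pivoted QR pivot selection, which greedily picks the remaining column of largest residual Euclidean norm, selects the same next pivot for Aᵀ (with accumulated orthonormal factor Q·P) as for Xᵀ (with accumulated orthonormal factor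 P). -/
open Matrix

/-- The Euclidean norm of a vector in `ℝ^n`. -/
noncomputable def euclNorm {n : ℕ} (v : Fin n → ℝ) : ℝ :=
  Real.sqrt (∑ i, (v i) ^ 2)

/-- With `Aᵀ = Q·Xᵀ`, `Q` and `P` having orthonormal columns, an index `i* ∈ R` maximizes
the residual norm `‖(I_N − (Q·P)·(Q·P)ᵀ)·(A_{i*})ᵀ‖₂` over a nonempty finite set `R` if and
only if it maximizes `‖(I_K − P·Pᵀ)·(X_{i*})ᵀ‖₂` over `R`; hence column-pivoted QR selects
the same next pivot for `Aᵀ` (with accumulated factor `Q·P`) as for `Xᵀ` (with factor `P`). -/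
theorem same_pivot_selection (N K r : ℕ)
    (A : Matrix (Fin N) (Fin N) ℝ)
    (Q X : Matrix (Fin N) (Fin K) ℝ)
    (hQ : Qᵀ * Q = 1) (hA : Aᵀ = Q * Xᵀ)
    (P : Matrix (Fin K) (Fin r) ℝ) (hP : Pᵀ * P = 1)
    (R : Finset (Fin N)) (hR : R.Nonempty)
    (istar : Fin N) (histar : istar ∈ R) :
    (∀ i ∈ R,
        euclNorm (((1 : Matrix (Fin N) (Fin N) ℝ) - (Q * P) * (Q * P)ᵀ) *ᵥ A i)
          ≤ euclNorm (((1 : Matrix (Fin N) (Fin N) ℝ) - (Q * P) * (Q * P)ᵀ) *ᵥ A istar))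
      ↔
    (∀ i ∈ R,
        euclNorm (((1 : Matrix (Fin K) (Fin K) ℝ) - P * Pᵀ) *ᵥ X i)
          ≤ euclNorm (((1 : Matrix (Fin K) (Fin K) ℝ) - P * Pᵀ) *ᵥ X istar)) := by
  have hnorm : ∀ w : Fin K → ℝ, euclNorm (Q *ᵥ w) = euclNorm w := by
    intro w
    have hdot : (Q *ᵥ w) ⬝ᵥ (Q *ᵥ w) = w ⬝ᵥ w := by
      rw [Matrix.dotProduct_mulVec, ← Matrix.mulVec_transpose,
        Matrix.mulVec_mulVec, hQ, Matrix.one_mulVec]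
    have h1 : ∑ j, (Q *ᵥ w) j ^ 2 = ∑ j, w j ^ 2 := by
      simpa [dotProduct, sq] using hdot
    simp [euclNorm, h1]
  have hrow : ∀ i, A i = Q *ᵥ X i := by
    intro i
    funext j
    have := congrFun (congrFun hA j) i
    simpa [Matrix.mul_apply, Matrix.mulVec, dotProduct] using this
  have key : ∀ i : Fin N,
      euclNorm (((1 : Matrix (Fin N) (Fin N) ℝ) - (Q * P) * (Q * P)ᵀ) *ᵥ A i)
        = euclNorm (((1 : Matrix (Fin K) (Fin K) ℝ) - P * Pᵀ) *ᵥ X i) := by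
    intro i
    have hvec : ((1 : Matrix (Fin N) (Fin N) ℝ) - (Q * P) * (Q * P)ᵀ) *ᵥ A i
        = Q *ᵥ (((1 : Matrix (Fin K) (Fin K) ℝ) - P * Pᵀ) *ᵥ X i) := by
      have hmat : ((1 : Matrix (Fin N) (Fin N) ℝ) - (Q * P) * (Q * P)ᵀ) * Q
          = Q * ((1 : Matrix (Fin K) (Fin K) ℝ) - P * Pᵀ) := by
        rw [Matrix.sub_mul, Matrix.mul_sub, Matrix.one_mul, Matrix.mul_one]
        congr 1
        rw [Matrix.transpose_mul]
        calc Q * P * (Pᵀ * Qᵀ) * Q = Q * P * Pᵀ * (Qᵀ * Q) := by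
              simp [Matrix.mul_assoc]
          _ = Q * (P * Pᵀ) := by rw [hQ]; simp [Matrix.mul_assoc]
      rw [hrow, Matrix.mulVec_mulVec, hmat, ← Matrix.mulVec_mulVec]
    rw [hvec, hnorm]
  constructor <;> intro h i hi
  · rw [← key, ← key]; exact h i hi
  · rw [key, key]; exact h i hi
end
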